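/- For k ≥ 2 and rational q with 2q an integer and k/2 ≤ q ≤ k-1, the minimum number of vertices m(q,k) of a weighted k-majority tournament T with γ_w(T) = q equals 3. In particular, every weighted k-majority tournament on 2 vertices has γ_w(T) ≥ k, and every one on 1 vertex has γ_w(T) = 0. -/

import Mathlib

open scoped Classical
open Finset

noncomputable section

/-- The weight of the pair (u,v): number of the 2k-1 linear orders in which u > v. -/
def weightFn {V : Type} [Fintype V] (k : ℕ) (π : Fin (2*k-1) → LinearOrder V) (u v : V) : ℕ :=
  (Finset.univ.filter (fun i => (π i).lt v u)).card

/-- u → v is an edge of the k-majority tournament iff u > v in at least k of the orders. -/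
def isEdge {V : Type} [Fintype V] (k : ℕ) (π : Fin (2*k-1) → LinearOrder V) (u v : V) : Prop :=
  k ≤ weightFn k π u v

/-- D is a dominating set: every vertex not in D is dominated by some vertex of D. -/
def IsDomSet {V : Type} [Fintype V] (k : ℕ) (π : Fin (2*k-1) → LinearOrder V) (D : Finset V) : Prop :=
  ∀ v, v ∉ D → ∃ u ∈ D, isEdge k π u v

/-- Average inweight of v with respect to D. -/
def avgInweight {V : Type} [Fintype V] (k : ℕ) (π : Fin (2*k-1) → LinearOrder V)
    (D : Finset V) (v : V) : ℚ :=
  (∑ u ∈ D.filter (fun u => isEdge k π u v), (weightFn k π u v : ℚ)) / D.card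

/-- The weight (approval gap) W(T,D) of a set D. -/
def Wgap {V : Type} [Fintype V] (k : ℕ) (π : Fin (2*k-1) → LinearOrder V) (D : Finset V) : ℚ :=
  if h : D = Finset.univ then 0
  else (Finset.univ \ D).inf'
    (Finset.sdiff_nonempty.mpr (fun hs => h (Finset.univ_subset_iff.mp hs)))
    (fun v => avgInweight k π D v)

/-- The maximum approval gap γ_w(T). -/
def gammaW {V : Type} [Fintype V] (k : ℕ) (π : Fin (2*k-1) → LinearOrder V) : ℚ :=
  (Finset.univ.filter (fun D : Finset V => IsDomSet k π D)).sup'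
    ⟨Finset.univ, Finset.mem_filter.mpr
      ⟨Finset.mem_univ _, fun v hv => absurd (Finset.mem_univ v) hv⟩⟩
    (fun D => Wgap k π D)

/-- Edge relation of the clockwise tournament CW(n); vertex v_{i+1} is index i (0-based). -/
def cwEdge (n : ℕ) (i j : Fin n) : Prop :=
  ∃ m : ℕ, 1 ≤ m ∧
    (if n % 2 = 1 then m ≤ (n-1)/2
     else if i.val < n/2 then m ≤ n/2 else m ≤ n/2 - 1) ∧
    j.val = (i.val + m) % n

end

/-!
A majority tournament is a tournament: `w(u,v) + w(v,u) = 2k-1`. On two vertices the winner `a`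
of the pair dominates alone and `W(T,{a}) = w(a,b) ≥ k`; on at most one vertex the only
dominating set is `V`, of weight `0`. As `0 < k/2 ≤ q ≤ k-1 < k`, three vertices are needed.
They suffice: for `q = (k+t)/2`, four blocks of orders realise the directed triangle
`0 → 1 → 2 → 0` with weights `k+t, k, k`. There a proper dominating set has two vertices and the
missing vertex has a single in-neighbour, so `γ_w = (k+t)/2`, attained by `{0,2}`.
-/

section MajorityTournament

variable {V : Type} [Fintype V] {k : ℕ} (π : Fin (2*k-1) → LinearOrder V)

lemma weightFn_self (u : V) : weightFn k π u u = 0 := by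
  simp only [weightFn, card_eq_zero, filter_eq_empty_iff]
  intro i _
  let _ := π i
  exact lt_irrefl u

lemma weightFn_add_weightFn_swap {u v : V} (huv : u ≠ v) :
    weightFn k π u v + weightFn k π v u = 2*k-1 := by
  have hsplit : ∀ i, (π i).lt v u ↔ ¬ (π i).lt u v := fun i => by
    let _ := π i
    exact ⟨fun h h' => lt_asymm h h', fun h => (le_of_not_gt h).lt_of_ne' huv⟩
  simp only [weightFn, hsplit, filter_not, card_sdiff_of_subset (filter_subset _ _), card_univ,
    Fintype.card_fin]
  have := card_filter_le (univ : Finset (Fin (2*k-1))) (fun i => (π i).lt u v)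
  rw [card_univ, Fintype.card_fin] at this
  omega

lemma isEdge_or_isEdge_swap {u v : V} (huv : u ≠ v) : isEdge k π u v ∨ isEdge k π v u := by
  have := weightFn_add_weightFn_swap π huv
  unfold isEdge
  omega

lemma isDomSet_univ : IsDomSet k π univ := fun v hv => absurd (mem_univ v) hv

lemma Wgap_univ : Wgap k π univ = 0 := dif_pos rfl

lemma Wgap_eq_avgInweight_of_forall_notMem_iff {D : Finset V} {v : V}
    (hD : ∀ u, u ∉ D ↔ u = v) : Wgap k π D = avgInweight k π D v := by
  have hne : D ≠ univ := fun h => (hD v).mpr rfl (h ▸ mem_univ v)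
  have hsdiff : univ \ D = {v} := by
    ext u
    simp [hD]
  rw [Wgap, dif_neg hne]
  simp only [hsdiff, inf'_singleton]

lemma Wgap_le_avgInweight {D : Finset V} {v : V} (hv : v ∉ D) :
    Wgap k π D ≤ avgInweight k π D v := by
  have hne : D ≠ univ := fun h => hv (h ▸ mem_univ v)
  rw [Wgap, dif_neg hne]
  exact inf'_le _ (mem_sdiff.mpr ⟨mem_univ v, hv⟩)

lemma avgInweight_of_filter_eq_singleton {D : Finset V} {u v : V}
    (h : D.filter (fun u => isEdge k π u v) = {u}) :
    avgInweight k π D v = weightFn k π u v / #D := by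
  rw [avgInweight, h, sum_singleton]

lemma Wgap_le_gammaW {D : Finset V} (hD : IsDomSet k π D) : Wgap k π D ≤ gammaW k π :=
  le_sup' (fun D => Wgap k π D) (mem_filter.mpr ⟨mem_univ D, hD⟩)

lemma gammaW_le {b : ℚ} (h : ∀ D, IsDomSet k π D → Wgap k π D ≤ b) : gammaW k π ≤ b :=
  sup'_le _ _ fun D hD => h D (mem_filter.mp hD).2

lemma gammaW_eq_zero_of_card_le_one (hV : Fintype.card V ≤ 1) : gammaW k π = 0 := by
  have : Subsingleton V := Fintype.card_le_one_iff_subsingleton.mp hV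
  have hdom : ∀ D, IsDomSet k π D → D = univ := fun D hD => eq_univ_iff_forall.mpr fun v => by
    by_contra hv
    obtain ⟨u, hu, -⟩ := hD v hv
    exact hv (Subsingleton.elim u v ▸ hu)
  refine le_antisymm (gammaW_le π fun D hD => ?_) ?_
  · rw [hdom D hD, Wgap_univ]
  · exact Wgap_univ π ▸ Wgap_le_gammaW π (isDomSet_univ π)

lemma le_gammaW_of_card_eq_two (hV : Fintype.card V = 2) : (k : ℚ) ≤ gammaW k π := by
  obtain ⟨a, b, hab, huniv⟩ := card_eq_two.mp (card_univ.trans hV)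
  wlog hedge : isEdge k π a b generalizing a b
  · exact this b a hab.symm (by rw [huniv, pair_comm])
      ((isEdge_or_isEdge_swap π hab).resolve_left hedge)
  have hmem : ∀ v, v = a ∨ v = b := fun v => by
    simpa using (huniv ▸ mem_univ v : v ∈ ({a, b} : Finset V))
  have hcompl : ∀ v, v ∉ ({a} : Finset V) ↔ v = b := fun v => by
    rcases hmem v with rfl | rfl <;> simp [hab, hab.symm]
  have hdom : IsDomSet k π {a} := fun v hv =>
    ⟨a, mem_singleton_self a, (hcompl v).mp hv ▸ hedge⟩
  have hin : ({a} : Finset V).filter (fun u => isEdge k π u b) = {a} := by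
    simpa using hedge
  calc (k : ℚ) ≤ weightFn k π a b := by exact_mod_cast hedge
    _ = Wgap k π {a} := by
      rw [Wgap_eq_avgInweight_of_forall_notMem_iff π hcompl,
        avgInweight_of_filter_eq_singleton π hin, card_singleton, Nat.cast_one, div_one]
    _ ≤ gammaW k π := Wgap_le_gammaW π hdom

end MajorityTournament

lemma card_filter_fin_val_mem_Ico {n a b : ℕ} (hb : b ≤ n) :
    #(univ.filter fun i : Fin n => a ≤ (i : ℕ) ∧ (i : ℕ) < b) = b - a := by
  rw [← Nat.card_Ico a b]
  refine card_nbij (↑) (fun i hi => by simpa using hi) (fun i _ j _ => Fin.ext) ?_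
  intro x hx
  rw [Finset.coe_Ico, Set.mem_Ico] at hx
  exact ⟨⟨x, by omega⟩, by simpa using hx, rfl⟩

section ThreeCycle

/-- Scores of the `i`-th order on `Fin 3`, in four consecutive blocks of sizes
`k-t-1, t+1, k-t-2, t+1` ranking `1 > 2 > 0`, `0 > 1 > 2`, `0 > 2 > 1` and `2 > 0 > 1`,
so that `w(0,1) = k+t`, `w(1,2) = k` and `w(0,2) = k-1`. -/
def cycleScore (k t i : ℕ) : Fin 3 → ℕ :=
  if i < k - t - 1 then ![0, 2, 1]
  else if i < k then ![2, 1, 0]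
  else if i < 2*k - t - 2 then ![2, 0, 1]
  else ![1, 0, 2]

lemma cycleScore_injective (k t i : ℕ) : Function.Injective (cycleScore k t i) := by
  unfold cycleScore
  split_ifs <;> decide

abbrev cycleOrders (k t : ℕ) : Fin (2*k-1) → LinearOrder (Fin 3) :=
  fun i => LinearOrder.lift' (cycleScore k t i) (cycleScore_injective k t i)

variable {k t : ℕ}

lemma weightFn_cycleOrders_eq {u v : Fin 3} {a b : ℕ} (hb : b ≤ 2*k-1)
    (h : ∀ i < 2*k-1, cycleScore k t i v < cycleScore k t i u ↔ a ≤ i ∧ i < b) :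
    weightFn k (cycleOrders k t) u v = b - a := by
  rw [weightFn, ← card_filter_fin_val_mem_Ico hb]
  congr 1
  ext i
  simp only [mem_filter, mem_univ, true_and]
  exact h i i.isLt

lemma weightFn_cycleOrders_zero_one (htk : t + 2 ≤ k) :
    weightFn k (cycleOrders k t) 0 1 = k + t := by
  rw [weightFn_cycleOrders_eq (a := k - t - 1) (b := 2*k-1) le_rfl]
  · omega
  · intro i hi; unfold cycleScore; split_ifs <;> simp <;> omega

lemma weightFn_cycleOrders_one_two (htk : t + 2 ≤ k) :
    weightFn k (cycleOrders k t) 1 2 = k := by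
  rw [weightFn_cycleOrders_eq (a := 0) (b := k) (by omega)]
  · omega
  · intro i hi; unfold cycleScore; split_ifs <;> simp <;> omega

lemma weightFn_cycleOrders_zero_two (htk : t + 2 ≤ k) :
    weightFn k (cycleOrders k t) 0 2 = k - 1 := by
  rw [weightFn_cycleOrders_eq (a := k - t - 1) (b := 2*k - t - 2) (by omega)]
  · omega
  · intro i hi; unfold cycleScore; split_ifs <;> simp <;> omega

lemma isEdge_cycleOrders_iff (htk : t + 2 ≤ k) (u v : Fin 3) :
    isEdge k (cycleOrders k t) u v ↔ u + 1 = v := by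
  have h01 := weightFn_cycleOrders_zero_one htk
  have h12 := weightFn_cycleOrders_one_two htk
  have h02 := weightFn_cycleOrders_zero_two htk
  have s01 := weightFn_add_weightFn_swap (cycleOrders k t) (show (0 : Fin 3) ≠ 1 by decide)
  have s12 := weightFn_add_weightFn_swap (cycleOrders k t) (show (1 : Fin 3) ≠ 2 by decide)
  have s02 := weightFn_add_weightFn_swap (cycleOrders k t) (show (0 : Fin 3) ≠ 2 by decide)
  fin_cases u <;> fin_cases v <;> simp [isEdge, weightFn_self] <;> omega

lemma weightFn_cycleOrders_le (htk : t + 2 ≤ k) {u v : Fin 3}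
    (huv : isEdge k (cycleOrders k t) u v) :
    weightFn k (cycleOrders k t) u v ≤ k + t := by
  have h12 := weightFn_cycleOrders_one_two htk
  have h02 := weightFn_cycleOrders_zero_two htk
  have s02 := weightFn_add_weightFn_swap (cycleOrders k t) (show (0 : Fin 3) ≠ 2 by decide)
  rw [isEdge_cycleOrders_iff htk] at huv
  subst huv
  fin_cases u <;> simp [weightFn_cycleOrders_zero_one htk] <;> omega

lemma card_eq_two_of_forall_sub_one_mem (D : Finset (Fin 3)) (hD : ∀ v ∉ D, v - 1 ∈ D)
    (hne : D ≠ univ) : #D = 2 := by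
  revert D
  decide

lemma Wgap_cycleOrders_le (htk : t + 2 ≤ k) {D : Finset (Fin 3)}
    (hD : IsDomSet k (cycleOrders k t) D) :
    Wgap k (cycleOrders k t) D ≤ (k + t) / 2 := by
  have hpred : ∀ v ∉ D, v - 1 ∈ D := fun v hv => by
    obtain ⟨u, hu, huv⟩ := hD v hv
    rw [isEdge_cycleOrders_iff htk, ← eq_sub_iff_add_eq] at huv
    exact huv ▸ hu
  by_cases hne : D = univ
  · rw [hne, Wgap_univ]
    positivity
  obtain ⟨v, hv⟩ : ∃ v, v ∉ D := by simpa [eq_univ_iff_forall] using hne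
  have hin : D.filter (fun u => isEdge k (cycleOrders k t) u v) = {v - 1} := by
    ext u
    simp only [mem_filter, mem_singleton, isEdge_cycleOrders_iff htk, ← eq_sub_iff_add_eq]
    exact ⟨And.right, fun hu => ⟨hu ▸ hpred v hv, hu⟩⟩
  have hw := weightFn_cycleOrders_le htk
    ((isEdge_cycleOrders_iff htk (v - 1) v).mpr (sub_add_cancel v 1))
  calc Wgap k (cycleOrders k t) D
      ≤ avgInweight k (cycleOrders k t) D v := Wgap_le_avgInweight _ hv
    _ = weightFn k (cycleOrders k t) (v - 1) v / 2 := by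
      rw [avgInweight_of_filter_eq_singleton _ hin, card_eq_two_of_forall_sub_one_mem D hpred hne]
      norm_num
    _ ≤ (k + t) / 2 := by gcongr; exact_mod_cast hw

lemma gammaW_cycleOrders (htk : t + 2 ≤ k) : gammaW k (cycleOrders k t) = (k + t) / 2 := by
  have hcompl : ∀ v : Fin 3, v ∉ ({0, 2} : Finset (Fin 3)) ↔ v = 1 := by decide
  have hin :
      ({0, 2} : Finset (Fin 3)).filter (fun u => isEdge k (cycleOrders k t) u 1) = {0} := by
    ext u
    simp only [mem_filter, isEdge_cycleOrders_iff htk]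
    fin_cases u <;> decide
  have hdom : IsDomSet k (cycleOrders k t) {0, 2} := fun v hv =>
    ⟨0, by decide, (isEdge_cycleOrders_iff htk 0 v).mpr ((hcompl v).mp hv).symm⟩
  refine le_antisymm (gammaW_le _ fun D hD => Wgap_cycleOrders_le htk hD) ?_
  calc ((k : ℚ) + t) / 2 = Wgap k (cycleOrders k t) {0, 2} := by
        rw [Wgap_eq_avgInweight_of_forall_notMem_iff _ hcompl,
          avgInweight_of_filter_eq_singleton _ hin,
          weightFn_cycleOrders_zero_one htk, card_pair (by decide)]
        norm_num
    _ ≤ gammaW k (cycleOrders k t) := Wgap_le_gammaW _ hdom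

end ThreeCycle

lemma exists_nat_eq_half_add {k : ℕ} {q : ℚ} (hq2 : ∃ m : ℤ, 2*q = m)
    (hql : (k:ℚ)/2 ≤ q) (hqu : q ≤ (k:ℚ)-1) : ∃ t : ℕ, t + 2 ≤ k ∧ q = (k + t) / 2 := by
  obtain ⟨m, hm⟩ := hq2
  have hkm : (k : ℤ) ≤ m := by exact_mod_cast (show (k : ℚ) ≤ m by linarith)
  have hmk : m + 2 ≤ 2 * k := by exact_mod_cast (show (m : ℚ) + 2 ≤ 2 * k by linarith)
  obtain ⟨t, ht⟩ := Int.eq_ofNat_of_zero_le (sub_nonneg.mpr hkm)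
  refine ⟨t, by omega, ?_⟩
  have : (m : ℚ) = k + t := by exact_mod_cast (show m = k + t by omega)
  linarith

theorem stmt16_general (k : ℕ) (q : ℚ) (hq2 : ∃ m : ℤ, 2*q = m)
    (hql : (k:ℚ)/2 ≤ q) (hqu : q ≤ (k:ℚ)-1) :
    (∃ (V : Type) (inst : Fintype V) (π : Fin (2*k-1) → LinearOrder V),
        @Fintype.card V inst = 3 ∧ @gammaW V inst k π = q) ∧
    (∀ (V : Type) (inst : Fintype V) (π : Fin (2*k-1) → LinearOrder V),
        @gammaW V inst k π = q → 3 ≤ @Fintype.card V inst) ∧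
    (∀ (V : Type) (inst : Fintype V) (π : Fin (2*k-1) → LinearOrder V),
        @Fintype.card V inst = 2 → (k:ℚ) ≤ @gammaW V inst k π) ∧
    (∀ (V : Type) (inst : Fintype V) (π : Fin (2*k-1) → LinearOrder V),
        @Fintype.card V inst = 1 → @gammaW V inst k π = 0) := by
  obtain ⟨t, htk, rfl⟩ := exists_nat_eq_half_add hq2 hql hqu
  refine ⟨⟨Fin 3, inferInstance, cycleOrders k t, Fintype.card_fin 3, gammaW_cycleOrders htk⟩,
    fun V _ π hγ => ?_, fun V _ π => le_gammaW_of_card_eq_two π,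
    fun V _ π hV => gammaW_eq_zero_of_card_le_one π hV.le⟩
  by_contra! hV
  obtain hV | hV : Fintype.card V ≤ 1 ∨ Fintype.card V = 2 := by omega
  · linarith [gammaW_eq_zero_of_card_le_one π hV]
  · linarith [le_gammaW_of_card_eq_two π hV]

theorem stmt16 (k : ℕ) (hk : 2 ≤ k) (q : ℚ) (hq2 : ∃ m : ℤ, 2*q = m)
    (hql : (k:ℚ)/2 ≤ q) (hqu : q ≤ (k:ℚ)-1) :
    (∃ (V : Type) (inst : Fintype V) (π : Fin (2*k-1) → LinearOrder V),
        @Fintype.card V inst = 3 ∧ @gammaW V inst k π = q) ∧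
    (∀ (V : Type) (inst : Fintype V) (π : Fin (2*k-1) → LinearOrder V),
        @gammaW V inst k π = q → 3 ≤ @Fintype.card V inst) ∧
    (∀ (V : Type) (inst : Fintype V) (π : Fin (2*k-1) → LinearOrder V),
        @Fintype.card V inst = 2 → (k:ℚ) ≤ @gammaW V inst k π) ∧
    (∀ (V : Type) (inst : Fintype V) (π : Fin (2*k-1) → LinearOrder V),
        @Fintype.card V inst = 1 → @gammaW V inst k π = 0) :=
  stmt16_general k q hq2 hql hqu
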